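/- Let N > 1 be real and let h be a CD(0,N) density on the compact interval [a,b], where a ≤ 0 < b, such that h is positive at every point of [a,b). Assume the right derivative H := (log∘h)'⁺(0) exists in ℝ. Then for every t ∈ (0,b] one has ∫_{(0,t)} h(θ) dθ ≤ h(0) · ∫₀ᵗ max(1 + H·θ/(N−1), 0)^{N−1} dθ, where the integrals are Lebesgue integrals. -/

import Mathlib

open Set MeasureTheory

/-- A `CD(0,N)` density on the set `I ⊆ ℝ`: a nonnegative function whose
`(N-1)`-st root is concave, stated via the defining inequality. -/
def IsCDZeroDensity (N : ℝ) (I : Set ℝ) (h : ℝ → ℝ) : Prop :=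
  (∀ x ∈ I, 0 ≤ h x) ∧
    ∀ x₀ ∈ I, ∀ x₁ ∈ I, ∀ t ∈ Set.Icc (0 : ℝ) 1,
      (1 - t) * h x₀ ^ (1 / (N - 1)) + t * h x₁ ^ (1 / (N - 1)) ≤
        h ((1 - t) * x₀ + t * x₁) ^ (1 / (N - 1))

open Filter Topology

/-!
Along the ray, `g = h ^ (1/(N-1))` is concave and its right derivative at `0` is
`g 0 · H/(N-1)`, because `g = exp (log h / (N-1))` wherever `h > 0`. Concavity puts `g` below
its right tangent line, `g θ ≤ g 0 · (1 + Hθ/(N-1))`; raising this to the power `N - 1`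
(after clipping at `0`) bounds `h θ` by `h 0 · (1 + Hθ/(N-1))₊^{N-1}`, and integrating gives
the claim.
-/

theorem IsCDZeroDensity.concaveOn_rpow {N : ℝ} {I : Set ℝ} {h : ℝ → ℝ}
    (hCD : IsCDZeroDensity N I h) (hI : Convex ℝ I) :
    ConcaveOn ℝ I (fun x => h x ^ (1 / (N - 1))) := by
  refine ⟨hI, fun x hx y hy s u hs hu hsu => ?_⟩
  obtain rfl : s = 1 - u := by linarith
  simpa only [smul_eq_mul] using hCD.2 x hx y hy u ⟨hu, by linarith⟩

theorem HasDerivWithinAt.rpow_const_of_log {f : ℝ → ℝ} {s : Set ℝ} {x H : ℝ}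
    (hf : HasDerivWithinAt (fun y => Real.log (f y)) H s x) (hx : 0 < f x)
    (hpos : ∀ᶠ y in 𝓝[s] x, 0 < f y) (p : ℝ) :
    HasDerivWithinAt (fun y => f y ^ p) (f x ^ p * (H * p)) s x := by
  have hexp := (hf.mul_const p).exp
  rw [← Real.rpow_def_of_pos hx] at hexp
  refine hexp.congr_of_eventuallyEq ?_ (Real.rpow_def_of_pos hx p)
  filter_upwards [hpos] with y hy using Real.rpow_def_of_pos hy p

theorem le_mul_max_rpow_of_rpow_le {p y c u : ℝ} (hp : 0 < p) (hy : 0 ≤ y) (hc : 0 ≤ c)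
    (h : y ^ (1 / p) ≤ c ^ (1 / p) * u) : y ≤ c * max u 0 ^ p := by
  have hroot : ∀ z : ℝ, 0 ≤ z → (z ^ (1 / p)) ^ p = z := fun z hz => by
    rw [← Real.rpow_mul hz, one_div_mul_cancel hp.ne', Real.rpow_one]
  calc y = (y ^ (1 / p)) ^ p := (hroot y hy).symm
    _ ≤ (c ^ (1 / p) * max u 0) ^ p := by
        gcongr
        exact h.trans (mul_le_mul_of_nonneg_left (le_max_left u 0) (by positivity))
    _ = c * max u 0 ^ p := by
        rw [Real.mul_rpow (by positivity) (le_max_right u 0), hroot c hc]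

theorem IsCDZeroDensity.le_mul_max_rpow {N H x₀ θ : ℝ} {I : Set ℝ} {h : ℝ → ℝ}
    (hN : 1 < N) (hI : Convex ℝ I) (hCD : IsCDZeroDensity N I h)
    (hx₀ : x₀ ∈ I) (hθ : θ ∈ I) (hlt : x₀ < θ) (h₀ : 0 < h x₀)
    (hpos : ∀ᶠ y in 𝓝[>] x₀, 0 < h y)
    (hH : HasDerivWithinAt (fun y => Real.log (h y)) H (Ioi x₀) x₀) :
    h θ ≤ h x₀ * max (1 + H * (θ - x₀) / (N - 1)) 0 ^ (N - 1) := by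
  have hp : 0 < N - 1 := by linarith
  refine le_mul_max_rpow_of_rpow_le hp (hCD.1 θ hθ) h₀.le ?_
  have hslope := (hCD.concaveOn_rpow hI).slope_le_of_hasDerivWithinAt_Ioi hx₀ hθ hlt
    (hH.rpow_const_of_log h₀ hpos (1 / (N - 1)))
  rw [slope_def_field, div_le_iff₀ (sub_pos.2 hlt)] at hslope
  calc h θ ^ (1 / (N - 1))
      ≤ h x₀ ^ (1 / (N - 1)) + h x₀ ^ (1 / (N - 1)) * (H * (1 / (N - 1))) * (θ - x₀) := by
        linarith
    _ = h x₀ ^ (1 / (N - 1)) * (1 + H * (θ - x₀) / (N - 1)) := by ring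

/-- One-dimensional Heintze–Karcher-type inequality along a transport ray with zero
curvature parameter: if `h` is a `CD(0,N)` density on `[a,b]` (`a ≤ 0 < b`), positive
on `[a,b)`, with right logarithmic derivative `H` at `0`, then for `t ∈ (0,b]` the
integral of `h` over `(0,t)` is bounded by `h(0)·∫₀ᵗ (1 + Hθ/(N-1))₊^{N-1} dθ`. -/
theorem cd_zero_density_heintze_karcher (N a b H : ℝ) (h : ℝ → ℝ)
    (hN : 1 < N) (ha : a ≤ 0) (hb : 0 < b)
    (hCD : IsCDZeroDensity N (Set.Icc a b) h)
    (hpos : ∀ x ∈ Set.Ico a b, 0 < h x)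
    (hH : HasDerivWithinAt (fun y => Real.log (h y)) H (Set.Ioi 0) 0) :
    ∀ t ∈ Set.Ioc 0 b,
      ∫ θ in Set.Ioo 0 t, h θ ≤
        h 0 * ∫ θ in (0:ℝ)..t, (max (1 + H * θ / (N - 1)) 0) ^ (N - 1) := by
  intro t ht
  have hIoo : ∀ θ ∈ Ioo 0 t, θ ∈ Icc a b := fun θ hθ => ⟨ha.trans hθ.1.le, hθ.2.le.trans ht.2⟩
  have hpos_right : ∀ᶠ y in 𝓝[>] (0 : ℝ), 0 < h y := by
    filter_upwards [Ioo_mem_nhdsGT hb] with y hy using hpos y ⟨ha.trans hy.1.le, hy.2⟩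
  have hbound : ∀ θ ∈ Ioo 0 t, h θ ≤ h 0 * max (1 + H * θ / (N - 1)) 0 ^ (N - 1) :=
    fun θ hθ => by
      simpa only [sub_zero] using hCD.le_mul_max_rpow hN (convex_Icc a b) ⟨ha, hb.le⟩
        (hIoo θ hθ) hθ.1 (hpos 0 ⟨ha, hb⟩) hpos_right hH
  have hcont : Continuous fun θ : ℝ => h 0 * max (1 + H * θ / (N - 1)) 0 ^ (N - 1) :=
    continuous_const.mul <| (Real.continuous_rpow_const (by linarith)).comp (by fun_prop)
  calc ∫ θ in Ioo 0 t, h θ ≤ ∫ θ in Ioo 0 t, h 0 * max (1 + H * θ / (N - 1)) 0 ^ (N - 1) :=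
        integral_mono_of_nonneg
          (ae_restrict_of_forall_mem measurableSet_Ioo fun θ hθ => hCD.1 θ (hIoo θ hθ))
          (hcont.integrableOn_Icc.mono_set Ioo_subset_Icc_self)
          (ae_restrict_of_forall_mem measurableSet_Ioo hbound)
    _ = h 0 * ∫ θ in (0:ℝ)..t, max (1 + H * θ / (N - 1)) 0 ^ (N - 1) := by
        rw [integral_const_mul, intervalIntegral.integral_of_le ht.1.le,
          integral_Ioc_eq_integral_Ioo]
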